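/- If λ ∈ ℂ and φ ∈ L²(I;ℂ) with φ ≠ 0 satisfy 𝓛φ = λφ, then either λ = 0 or λ = 4Kκ − p − (2K/(πℓ))·sin(2πℓκ) for some integer ℓ ≥ 1. In other words, the only eigenvalues of 𝓛 are 0 (with eigenfunction 1) and the numbers λ_ℓ = 4Kκ − p − (2K/(πℓ)) sin(2πℓκ), ℓ ∈ ℕ. -/

import Mathlib

/-!
The kernel `p - 2K·W₂(x, y)` only depends on `x - y` modulo `1`, so `𝓛` is a convolution
operator on the circle and is diagonalised by the exponentials `eₙ(x) = e^{2πinx}`. Pairing the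
eigenvalue equation with `eₙ` and using Fubini gives `λ·φ̂(n) = λₙ·φ̂(n)`, where `λ₀ = 0` and, for
`n ≠ 0`, `λₙ = 4Kκ - p - (2K/(πn)) sin(2πnκ)` comes from `∫_{-κ}^{κ} eₙ = sin(2πnκ)/(πn)`.
If `λ` is none of the `λₙ`, all Fourier coefficients of `φ` vanish, and Parseval's identity
forces `φ = 0`.
-/

open MeasureTheory Real Set

noncomputable section

/-- The Lebesgue measure restricted to the interval `I = [0,1]`. -/
def μI : MeasureTheory.Measure ℝ := MeasureTheory.volume.restrict (Set.Icc (0:ℝ) 1)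

/-- The graphon of the `κ`-nearest neighbor graph. -/
def W2 (κ : ℝ) (x y : ℝ) : ℝ := if |x - y| ≤ κ ∨ 1 - κ ≤ |x - y| then 1 else 0

/-- The linearization `𝓛` of the continuum limit about `u ≡ 0`, acting on complex-valued
functions: `(𝓛φ)(x) = ∫₀¹ (p - 2K·W₂(x,y))(φ(y) - φ(x)) dy`. -/
def LopC (p K κ : ℝ) (φ : ℝ → ℂ) (x : ℝ) : ℂ :=
  ∫ y in Set.Icc (0:ℝ) 1, (((p - 2 * K * W2 κ x y : ℝ)) : ℂ) * (φ y - φ x)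

theorem ae_eq_zero_of_fourierCoeffOn_eq_zero {a b : ℝ} (hab : a < b) {f : ℝ → ℂ}
    (hf : MemLp f 2 (volume.restrict (Ioc a b))) (h : ∀ n, fourierCoeffOn hab f n = 0) :
    f =ᵐ[volume.restrict (Ioc a b)] 0 := by
  have hsum := hasSum_sq_fourierCoeffOn hab hf
  simp only [h, norm_zero, ne_eq, OfNat.ofNat_ne_zero, not_false_eq_true, zero_pow] at hsum
  have hint : ∫ x in Ioc a b, ‖f x‖ ^ 2 = 0 := by
    have := hasSum_zero.unique hsum
    rw [intervalIntegral.integral_of_le hab.le] at this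
    simpa [(sub_pos.2 hab).ne'] using this.symm
  filter_upwards [(integral_eq_zero_iff_of_nonneg (fun x => by positivity)
    (hf.integrable_norm_pow two_ne_zero)).1 hint] with x hx
  simpa using hx

theorem integral_integral_mul_sub {α : Type*} [MeasurableSpace α] {μ : Measure α}
    [IsFiniteMeasure μ] {G : α → α → ℂ} {C : ℝ}
    (hG : AEStronglyMeasurable (Function.uncurry G) (μ.prod μ)) (hGC : ∀ x y, ‖G x y‖ ≤ C)
    {φ : α → ℂ} (hφ : Integrable φ μ) :
    ∫ x, ∫ y, G x y * (φ y - φ x) ∂μ ∂μ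
      = ∫ y, (∫ x, G x y ∂μ) * φ y ∂μ - ∫ x, (∫ y, G x y ∂μ) * φ x ∂μ := by
  have hA : Integrable (fun z : α × α => G z.1 z.2 * φ z.2) (μ.prod μ) :=
    ((integrable_const C).mul_prod hφ.norm).mono' (hG.mul hφ.1.comp_snd)
      (.of_forall fun z => by rw [norm_mul]; gcongr; exact hGC _ _)
  have hB : Integrable (fun z : α × α => G z.1 z.2 * φ z.1) (μ.prod μ) :=
    (hφ.norm.mul_prod (integrable_const C)).mono' (hG.mul hφ.1.comp_fst)
      (.of_forall fun z => by rw [norm_mul, mul_comm ‖φ z.1‖]; gcongr; exact hGC _ _)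
  calc ∫ x, ∫ y, G x y * (φ y - φ x) ∂μ ∂μ
      = ∫ z, G z.1 z.2 * φ z.2 - G z.1 z.2 * φ z.1 ∂μ.prod μ := by
        simp only [mul_sub]
        exact integral_integral (hA.sub hB)
    _ = ∫ y, ∫ x, G x y * φ y ∂μ ∂μ - ∫ x, ∫ y, G x y * φ x ∂μ ∂μ := by
        rw [integral_sub hA hB, integral_prod_symm _ hA, integral_prod _ hB]
    _ = _ := by simp only [integral_mul_const]

theorem intervalIntegral_add_sub_one_add_add_one {h : ℝ → ℂ}
    (hh : ∀ a b, IntervalIntegrable h volume a b) :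
    ∫ x in (0:ℝ)..1, (h x + h (x - 1) + h (x + 1)) = ∫ x in (-1:ℝ)..2, h x := by
  have hsub : IntervalIntegrable (fun x => h (x - 1)) volume 0 1 := by
    simpa using (hh (0 - 1) (1 - 1)).comp_sub_right 1
  have hadd : IntervalIntegrable (fun x => h (x + 1)) volume 0 1 := by
    simpa using (hh (0 + 1) (1 + 1)).comp_add_right 1
  rw [intervalIntegral.integral_add ((hh 0 1).add hsub) hadd,
    intervalIntegral.integral_add (hh 0 1) hsub,
    intervalIntegral.integral_comp_sub_right, intervalIntegral.integral_comp_add_right,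
    zero_sub, sub_self, zero_add, one_add_one_eq_two,
    ← intervalIntegral.integral_add_adjacent_intervals (hh (-1) 0) (hh 0 2),
    ← intervalIntegral.integral_add_adjacent_intervals (hh 0 1) (hh 1 2)]
  ring

theorem intervalIntegral_indicator_Icc {f : ℝ → ℂ} {a b c d : ℝ} (hac : a < c) (hcd : c ≤ d)
    (hdb : d ≤ b) : ∫ x in a..b, (Icc c d).indicator f x = ∫ x in c..d, f x := by
  rw [intervalIntegral.integral_of_le (hac.le.trans (hcd.trans hdb)),
    intervalIntegral.integral_of_le hcd, setIntegral_indicator measurableSet_Icc,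
    inter_eq_right.2 (Icc_subset_Ioc hac hdb), integral_Icc_eq_integral_Ioc]

def fourierMode (n : ℤ) (x : ℝ) : ℂ := Complex.exp (2 * π * Complex.I * n * x)

theorem fourierMode_add (n : ℤ) (x y : ℝ) :
    fourierMode n (x + y) = fourierMode n x * fourierMode n y := by
  simp only [fourierMode, ← Complex.exp_add]; push_cast; ring_nf

@[simp]
theorem fourierMode_zero_left (x : ℝ) : fourierMode 0 x = 1 := by simp [fourierMode]

theorem fourierMode_one_right (n : ℤ) : fourierMode n 1 = 1 := by
  rw [fourierMode, ← Complex.exp_int_mul_two_pi_mul_I n]; push_cast; ring_nf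

theorem continuous_fourierMode (n : ℤ) : Continuous (fourierMode n) := by
  unfold fourierMode; fun_prop

theorem periodic_fourierMode (n : ℤ) : Function.Periodic (fourierMode n) 1 := fun x => by
  rw [fourierMode_add, fourierMode_one_right, mul_one]

theorem norm_fourierMode (n : ℤ) (x : ℝ) : ‖fourierMode n x‖ = 1 := by
  rw [fourierMode, show 2 * π * Complex.I * n * x = ((2 * π * n * x : ℝ) : ℂ) * Complex.I by
    push_cast; ring]
  exact Complex.norm_exp_ofReal_mul_I _

theorem setIntegral_Icc_fourierMode (n : ℤ) :
    ∫ x in Icc (0:ℝ) 1, fourierMode n x = if n = 0 then 1 else 0 := by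
  split_ifs with hn
  · simp [hn]
  · have hc : 2 * π * Complex.I * n ≠ 0 := by simp [hn, Real.pi_ne_zero]
    rw [integral_Icc_eq_integral_Ioc, ← intervalIntegral.integral_of_le zero_le_one]
    calc ∫ x in (0:ℝ)..1, fourierMode n x
        = (fourierMode n 1 - fourierMode n 0) / (2 * π * Complex.I * n) :=
          integral_exp_mul_complex hc
      _ = 0 := by
        rw [fourierMode_one_right, show fourierMode n 0 = 1 by simp [fourierMode], sub_self,
          zero_div]

theorem intervalIntegral_fourierMode_neg_self {n : ℤ} (hn : n ≠ 0) (κ : ℝ) :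
    ∫ t in (-κ)..κ, fourierMode n t = Real.sin (2 * π * n * κ) / (π * n) := by
  have hc : 2 * π * Complex.I * n ≠ 0 := by simp [hn, Real.pi_ne_zero]
  calc ∫ t in (-κ)..κ, fourierMode n t
      = (fourierMode n κ - fourierMode n (-κ)) / (2 * π * Complex.I * n) :=
        integral_exp_mul_complex hc
    _ = _ := by
      rw [Complex.ofReal_sin, Complex.sin, fourierMode, fourierMode]
      field_simp
      ring_nf
      simp [Complex.I_sq]
      ring_nf

theorem intervalIntegral_fourierMode_sub_add (n : ℤ) (y κ : ℝ) :
    ∫ x in (y - κ)..(y + κ), fourierMode n x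
      = fourierMode n y * ∫ t in (-κ)..κ, fourierMode n t := by
  simp only [← intervalIntegral.integral_const_mul, ← fourierMode_add]
  rw [intervalIntegral.integral_comp_add_left, sub_eq_add_neg]

theorem measurable_W2 (κ : ℝ) : Measurable (Function.uncurry (W2 κ)) := by
  have h : Measurable fun z : ℝ × ℝ => |z.1 - z.2| := (measurable_fst.sub measurable_snd).abs
  exact Measurable.ite ((measurableSet_le h measurable_const).union
    (measurableSet_le measurable_const h)) measurable_const measurable_const

theorem W2_comm (κ x y : ℝ) : W2 κ x y = W2 κ y x := by rw [W2, W2, abs_sub_comm]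

theorem abs_W2_le_one (κ x y : ℝ) : |W2 κ x y| ≤ 1 := by unfold W2; split_ifs <;> simp

theorem norm_ofReal_sub_mul_W2_le (p K κ x y : ℝ) :
    ‖((p - 2 * K * W2 κ x y : ℝ) : ℂ)‖ ≤ |p| + 2 * |K| := by
  rw [Complex.norm_real, Real.norm_eq_abs]
  calc |p - 2 * K * W2 κ x y| ≤ |p| + 2 * |K| * |W2 κ x y| := by
        simpa [abs_mul] using abs_sub p (2 * K * W2 κ x y)
    _ ≤ |p| + 2 * |K| := by nlinarith [abs_nonneg K, abs_W2_le_one κ x y]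

/-- On `[0,1]²` the band `|x - y| ≤ κ` together with the corners `|x - y| ≥ 1 - κ` is the
`κ`-neighbourhood of `y` in `ℝ/ℤ`, seen through the translates of `x` by `0` and `±1`. -/
theorem W2_mul_eq_indicator_add {κ x y : ℝ} (hκ : κ < 1 / 2) (hx : x ∈ Icc (0:ℝ) 1)
    (hy : y ∈ Icc (0:ℝ) 1) {f : ℝ → ℂ} (hf : Function.Periodic f 1) :
    (W2 κ x y : ℂ) * f x = (Icc (y - κ) (y + κ)).indicator f x
      + (Icc (y - κ) (y + κ)).indicator f (x - 1) + (Icc (y - κ) (y + κ)).indicator f (x + 1) := by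
  obtain ⟨hx0, hx1⟩ := hx
  obtain ⟨hy0, hy1⟩ := hy
  simp only [Set.indicator_apply, mem_Icc, hf.sub_eq, hf x, W2, abs_le, le_abs]
  split_ifs <;> simp only [Complex.ofReal_one, Complex.ofReal_zero] <;> grind

theorem setIntegral_Icc_W2_mul {κ y : ℝ} (hκ₀ : 0 ≤ κ) (hκ : κ < 1 / 2) (hy : y ∈ Icc (0:ℝ) 1)
    {f : ℝ → ℂ} (hf : Function.Periodic f 1) (hfc : Continuous f) :
    ∫ x in Icc (0:ℝ) 1, (W2 κ x y : ℂ) * f x = ∫ x in (y - κ)..(y + κ), f x := by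
  set h := (Icc (y - κ) (y + κ)).indicator f
  have hh : ∀ a b, IntervalIntegrable h volume a b := fun a b =>
    (hfc.integrableOn_Icc.integrable_indicator measurableSet_Icc).intervalIntegrable
  calc ∫ x in Icc (0:ℝ) 1, (W2 κ x y : ℂ) * f x
      = ∫ x in (0:ℝ)..1, (h x + h (x - 1) + h (x + 1)) := by
        rw [intervalIntegral.integral_of_le zero_le_one, ← integral_Icc_eq_integral_Ioc]
        exact setIntegral_congr_fun measurableSet_Icc fun x hx =>
          W2_mul_eq_indicator_add hκ hx hy hf
    _ = ∫ x in (-1:ℝ)..2, h x := intervalIntegral_add_sub_one_add_add_one hh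
    _ = ∫ x in (y - κ)..(y + κ), f x :=
        intervalIntegral_indicator_Icc (by linarith [hy.1]) (by linarith) (by linarith [hy.2])

instance : IsProbabilityMeasure μI := ⟨by simp [μI]⟩

/-- The case `n = 0` is separate: there the generic formula would evaluate, through `0 / 0 = 0`,
to `4Kκ - p` instead of the eigenvalue `0` of the constants. -/
def lopSymbol (p K κ : ℝ) (n : ℤ) : ℝ :=
  if n = 0 then 0 else 4 * K * κ - p - 2 * K / (π * n) * Real.sin (2 * π * n * κ)

theorem lopSymbol_eq_zero_or (p K κ : ℝ) (n : ℤ) :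
    lopSymbol p K κ n = 0 ∨ ∃ ℓ : ℕ, 1 ≤ ℓ ∧
      lopSymbol p K κ n = 4 * K * κ - p - 2 * K / (π * ℓ) * Real.sin (2 * π * ℓ * κ) := by
  rcases eq_or_ne n 0 with rfl | hn
  · simp [lopSymbol]
  obtain ⟨m, rfl | rfl⟩ := Int.eq_nat_or_neg n
  · refine Or.inr ⟨m, by omega, ?_⟩
    simp only [lopSymbol, if_neg hn, Int.cast_natCast]
  · refine Or.inr ⟨m, by omega, ?_⟩
    simp only [lopSymbol, if_neg hn, Int.cast_neg, Int.cast_natCast, mul_neg, neg_mul,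
      Real.sin_neg, div_neg, neg_neg]

theorem integral_fourierMode_mul_kernel {κ y : ℝ} (hκ₀ : 0 ≤ κ) (hκ : κ < 1 / 2)
    (hy : y ∈ Icc (0:ℝ) 1) (p K : ℝ) (n : ℤ) :
    ∫ x, fourierMode n x * ((p - 2 * K * W2 κ x y : ℝ) : ℂ) ∂μI
      = (lopSymbol p K κ n + p - 4 * K * κ : ℝ) * fourierMode n y := by
  have hWE : Integrable (fun x => (W2 κ x y : ℂ) * fourierMode n x) μI :=
    (continuous_fourierMode n).integrableOn_Icc.bdd_mul (c := 1)
      (Complex.measurable_ofReal.comp ((measurable_W2 κ).comp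
        (measurable_id.prodMk measurable_const))).aestronglyMeasurable
      (.of_forall fun x => by rw [Complex.norm_real]; exact abs_W2_le_one κ x y)
  have hE : Integrable (fun x => (p : ℂ) * fourierMode n x) μI :=
    (continuous_fourierMode n).integrableOn_Icc.const_mul _
  calc ∫ x, fourierMode n x * ((p - 2 * K * W2 κ x y : ℝ) : ℂ) ∂μI
      = ∫ x, (p : ℂ) * fourierMode n x - 2 * K * ((W2 κ x y : ℂ) * fourierMode n x) ∂μI := by
        congr 1; ext x; push_cast; ring
    _ = p * (if n = 0 then 1 else 0)
          - 2 * K * (fourierMode n y * ∫ t in (-κ)..κ, fourierMode n t) := by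
        rw [integral_sub hE (hWE.const_mul _), integral_const_mul, integral_const_mul, μI,
          setIntegral_Icc_fourierMode, setIntegral_Icc_W2_mul hκ₀ hκ hy (periodic_fourierMode n)
          (continuous_fourierMode n), intervalIntegral_fourierMode_sub_add]
    _ = _ := by
        rcases eq_or_ne n 0 with rfl | hn
        · simp [lopSymbol]; ring
        · simp only [if_neg hn, lopSymbol, intervalIntegral_fourierMode_neg_self hn]
          push_cast; ring

theorem integral_kernel {κ x : ℝ} (hκ₀ : 0 ≤ κ) (hκ : κ < 1 / 2) (hx : x ∈ Icc (0:ℝ) 1)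
    (p K : ℝ) : ∫ y, ((p - 2 * K * W2 κ x y : ℝ) : ℂ) ∂μI = (p - 4 * K * κ : ℝ) := by
  simpa [W2_comm κ x, lopSymbol] using integral_fourierMode_mul_kernel hκ₀ hκ hx p K 0

theorem integral_fourierMode_mul_LopC {κ : ℝ} (hκ₀ : 0 ≤ κ) (hκ : κ < 1 / 2) (p K : ℝ)
    {φ : ℝ → ℂ} (hφ : Integrable φ μI) (n : ℤ) :
    ∫ x, fourierMode n x * LopC p K κ φ x ∂μI
      = lopSymbol p K κ n * ∫ x, fourierMode n x * φ x ∂μI := by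
  set g : ℝ → ℝ → ℂ := fun x y => ((p - 2 * K * W2 κ x y : ℝ) : ℂ)
  have hG : AEStronglyMeasurable (Function.uncurry fun x y => fourierMode n x * g x y)
      (μI.prod μI) := by
    have := measurable_W2 κ
    have := continuous_fourierMode n
    fun_prop
  have hGC (x y : ℝ) : ‖fourierMode n x * g x y‖ ≤ |p| + 2 * |K| := by
    rw [norm_mul, norm_fourierMode, one_mul]; exact norm_ofReal_sub_mul_W2_le p K κ x y
  have hIcc : ∀ᵐ x ∂μI, x ∈ Icc (0:ℝ) 1 := ae_restrict_mem measurableSet_Icc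
  calc ∫ x, fourierMode n x * LopC p K κ φ x ∂μI
      = ∫ x, ∫ y, fourierMode n x * g x y * (φ y - φ x) ∂μI ∂μI := by
        refine integral_congr_ae (.of_forall fun x => ?_)
        simp only [LopC, g, mul_assoc, ← integral_const_mul]
        rfl
    _ = ∫ y, (∫ x, fourierMode n x * g x y ∂μI) * φ y ∂μI
          - ∫ x, (∫ y, fourierMode n x * g x y ∂μI) * φ x ∂μI :=
        integral_integral_mul_sub hG hGC hφ
    _ = ∫ y, ((lopSymbol p K κ n + p - 4 * K * κ : ℝ) : ℂ) * (fourierMode n y * φ y) ∂μI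
          - ∫ x, ((p - 4 * K * κ : ℝ) : ℂ) * (fourierMode n x * φ x) ∂μI := by
        congr 1 <;> refine integral_congr_ae (hIcc.mono fun x hx => ?_) <;> dsimp only
        · rw [integral_fourierMode_mul_kernel hκ₀ hκ hx]; ring
        · rw [integral_const_mul, integral_kernel hκ₀ hκ hx]; ring
    _ = _ := by rw [integral_const_mul, integral_const_mul]; push_cast; ring

theorem ae_eq_zero_of_integral_fourierMode_mul_eq_zero {φ : ℝ → ℂ} (hφ : MemLp φ 2 μI)
    (h : ∀ n, ∫ x, fourierMode n x * φ x ∂μI = 0) : φ =ᵐ[μI] 0 := by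
  have hμ : volume.restrict (Ioc (0:ℝ) 1) = μI := Measure.restrict_congr_set Ioc_ae_eq_Icc
  rw [← hμ] at hφ h ⊢
  refine ae_eq_zero_of_fourierCoeffOn_eq_zero zero_lt_one hφ fun n => ?_
  rw [fourierCoeffOn_eq_integral, intervalIntegral.integral_of_le zero_le_one, ← h (-n)]
  simp [fourierMode, ← Complex.exp_conj, map_ofNat]

theorem Lop_eigenvalues_classification_general
    (κ p K : ℝ) (hκ : κ ∈ Set.Ioo (0:ℝ) (1/2))
    (lam : ℂ) (φ : ℝ → ℂ) (hφ : MeasureTheory.MemLp φ 2 μI)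
    (hφ0 : ¬ (φ =ᵐ[μI] fun _ => (0:ℂ)))
    (heig : (fun x => LopC p K κ φ x) =ᵐ[μI] fun x => lam * φ x) :
    lam = 0 ∨ ∃ ℓ : ℕ, 1 ≤ ℓ ∧
      lam = ((4 * K * κ - p - (2 * K / (π * ℓ)) * Real.sin (2 * π * ℓ * κ) : ℝ) : ℂ) := by
  by_contra hlam
  refine hφ0 (ae_eq_zero_of_integral_fourierMode_mul_eq_zero hφ fun n => ?_)
  by_contra hc
  have hcoeff : lam * ∫ x, fourierMode n x * φ x ∂μI
      = lopSymbol p K κ n * ∫ x, fourierMode n x * φ x ∂μI := by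
    rw [← integral_fourierMode_mul_LopC hκ.1.le hκ.2 p K (hφ.integrable one_le_two),
      ← integral_const_mul]
    exact integral_congr_ae (heig.mono fun x hx => by simp only at hx ⊢; rw [hx]; ring)
  have hlam_eq := mul_right_cancel₀ hc hcoeff
  rcases lopSymbol_eq_zero_or p K κ n with h | ⟨ℓ, hℓ, h⟩
  · exact hlam (Or.inl (by rw [hlam_eq, h, Complex.ofReal_zero]))
  · exact hlam (Or.inr ⟨ℓ, hℓ, by rw [hlam_eq, h]⟩)

/-- The only eigenvalues of `𝓛` on `L²(I;ℂ)` are `0` and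
`λ_ℓ = 4Kκ - p - (2K/(πℓ)) sin(2πℓκ)`, `ℓ ∈ ℕ`. -/
theorem Lop_eigenvalues_classification
    (κ p K : ℝ) (hκ : κ ∈ Set.Ioo (0:ℝ) (1/2)) (hp : 0 < p)
    (lam : ℂ) (φ : ℝ → ℂ) (hφ : MeasureTheory.MemLp φ 2 μI)
    (hφ0 : ¬ (φ =ᵐ[μI] fun _ => (0:ℂ)))
    (heig : (fun x => LopC p K κ φ x) =ᵐ[μI] fun x => lam * φ x) :
    lam = 0 ∨ ∃ ℓ : ℕ, 1 ≤ ℓ ∧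
      lam = ((4 * K * κ - p - (2 * K / (π * ℓ)) * Real.sin (2 * π * ℓ * κ) : ℝ) : ℂ) :=
  Lop_eigenvalues_classification_general κ p K hκ lam φ hφ hφ0 heig
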